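/- Let (X,d) be a geodesic metric space with base point p, ε > 0, and M > 0. Then there exists a constant C = exp(2εM) such that for every pair of points x, y ∈ X with d(x,y) ≤ M, the ρ_ε-length of any geodesic [x,y] from x to y satisfies l_{d_ε}([x,y]) ≤ C · d_ε(x,y), where d_ε(x,y) is the infimum of ρ_ε-lengths over all rectifiable curves from x to y. -/

import Mathlib

noncomputable section

variable {X : Type*} [MetricSpace X]

/-- `γ : [0,L] → X` is a `1`-Lipschitz (arc-length) parametrization. -/
def IsArcParam (γ : ℝ → X) (L : ℝ) : Prop :=
  ∀ s ∈ Set.Icc (0:ℝ) L, ∀ t ∈ Set.Icc (0:ℝ) L, dist (γ s) (γ t) ≤ |s - t|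

/-- `γ` is a (unit-speed) geodesic from `x` to `y`. -/
def IsGeodesicFromTo (γ : ℝ → X) (x y : X) : Prop :=
  γ 0 = x ∧ γ (dist x y) = y ∧
    ∀ s ∈ Set.Icc (0:ℝ) (dist x y), ∀ t ∈ Set.Icc (0:ℝ) (dist x y),
      dist (γ s) (γ t) = |s - t|

/-- The `ρ_ε`-length of an arc-length parametrized curve `γ : [0,L] → X`,
where `ρ_ε = exp (-ε d(p,·))`. -/
def uniLength (p : X) (ε : ℝ) (γ : ℝ → X) (L : ℝ) : ℝ :=
  ∫ t in (0:ℝ)..L, Real.exp (-ε * dist p (γ t))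

/-- The uniformized distance `d_ε(x,y)`: infimum of `ρ_ε`-lengths over rectifiable
(arc-length parametrized) curves from `x` to `y`. -/
def uniDist (p : X) (ε : ℝ) (x y : X) : ℝ :=
  sInf {l | ∃ γ : ℝ → X, ∃ L : ℝ, 0 ≤ L ∧ IsArcParam γ L ∧ γ 0 = x ∧ γ L = y ∧
    l = uniLength p ε γ L}


/-! Along a geodesic from `x` of length `d`, the distance to `p` is at least
`d(p,x) - d`, so its `ρ_ε`-length is at most `d · exp (-ε (d(p,x) - d))`. Any `1`-Lipschitz
curve from `x` to `y` has length at least `d`, and on its first `d` units of time it stays within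
`d(p,x) + d` of `p`, so its `ρ_ε`-length is at least `d · exp (-ε (d(p,x) + d))`.
The two bounds differ by the factor `exp (2 ε d) ≤ exp (2 ε M)`. -/

open Real Set

namespace IsArcParam

variable {σ : ℝ → X} {L : ℝ}

theorem lipschitzOnWith (hσ : IsArcParam σ L) : LipschitzOnWith 1 σ (Icc 0 L) :=
  LipschitzOnWith.of_dist_le_mul fun s hs t ht => by
    simpa [Real.dist_eq] using hσ s hs t ht

theorem dist_start_le (hσ : IsArcParam σ L) {t : ℝ} (ht : t ∈ Icc 0 L) :
    dist (σ 0) (σ t) ≤ t := by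
  simpa [abs_of_nonneg ht.1] using hσ 0 ⟨le_rfl, ht.1.trans ht.2⟩ t ht

theorem intervalIntegrable_density (hσ : IsArcParam σ L) (p : X) (ε : ℝ) {a b : ℝ}
    (hab : uIcc a b ⊆ Icc 0 L) :
    IntervalIntegrable (fun t => exp (-ε * dist p (σ t))) MeasureTheory.volume a b := by
  refine ContinuousOn.intervalIntegrable ?_
  refine continuous_exp.comp_continuousOn (continuousOn_const.mul ?_)
  exact (continuous_const.dist continuous_id).comp_continuousOn
    (hσ.lipschitzOnWith.continuousOn.mono hab)

theorem mul_exp_le_uniLength (hσ : IsArcParam σ L) (p : X) {ε a : ℝ} (hε : 0 ≤ ε)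
    (ha : 0 ≤ a) (haL : a ≤ L) :
    a * exp (-ε * (dist p (σ 0) + a)) ≤ uniLength p ε σ L := by
  have hhead_int := hσ.intervalIntegrable_density p ε (a := 0) (b := a)
    (by rw [uIcc_of_le ha]; exact Icc_subset_Icc le_rfl haL)
  have htail_int := hσ.intervalIntegrable_density p ε (a := a) (b := L)
    (by rw [uIcc_of_le haL]; exact Icc_subset_Icc ha le_rfl)
  have hpointwise : ∀ t ∈ Icc 0 a, exp (-ε * (dist p (σ 0) + a)) ≤ exp (-ε * dist p (σ t)) := by
    intro t ht
    have hpt : dist p (σ t) ≤ dist p (σ 0) + a :=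
      (dist_triangle _ _ _).trans
        (add_le_add_right ((hσ.dist_start_le ⟨ht.1, ht.2.trans haL⟩).trans ht.2) _)
    exact exp_le_exp.mpr (by nlinarith)
  have hhead : a * exp (-ε * (dist p (σ 0) + a)) ≤
      ∫ t in (0 : ℝ)..a, exp (-ε * dist p (σ t)) := by
    simpa using intervalIntegral.integral_mono_on ha intervalIntegrable_const hhead_int hpointwise
  have htail : 0 ≤ ∫ t in a..L, exp (-ε * dist p (σ t)) :=
    intervalIntegral.integral_nonneg haL fun t _ => (exp_pos _).le
  rw [uniLength, ← intervalIntegral.integral_add_adjacent_intervals hhead_int htail_int]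
  linarith

end IsArcParam

namespace IsGeodesicFromTo

variable {γ : ℝ → X} {x y : X}

theorem isArcParam (hγ : IsGeodesicFromTo γ x y) : IsArcParam γ (dist x y) :=
  fun s hs t ht => (hγ.2.2 s hs t ht).le

theorem dist_start (hγ : IsGeodesicFromTo γ x y) {t : ℝ} (ht : t ∈ Icc 0 (dist x y)) :
    dist x (γ t) = t := by
  simpa [hγ.1, abs_of_nonneg ht.1] using hγ.2.2 0 ⟨le_rfl, dist_nonneg⟩ t ht

theorem uniLength_le (hγ : IsGeodesicFromTo γ x y) (p : X) {ε : ℝ} (hε : 0 ≤ ε) :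
    uniLength p ε γ (dist x y) ≤ dist x y * exp (-ε * (dist p x - dist x y)) := by
  have hpointwise : ∀ t ∈ Icc 0 (dist x y),
      exp (-ε * dist p (γ t)) ≤ exp (-ε * (dist p x - dist x y)) := by
    intro t ht
    have hpt : dist p x - dist x y ≤ dist p (γ t) := by
      have := dist_triangle p (γ t) x
      rw [dist_comm (γ t), hγ.dist_start ht] at this
      linarith [ht.2]
    exact exp_le_exp.mpr (by nlinarith)
  simpa [uniLength] using intervalIntegral.integral_mono_on dist_nonneg
    (hγ.isArcParam.intervalIntegrable_density p ε (uIcc_of_le dist_nonneg).subset)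
    intervalIntegrable_const hpointwise

theorem mul_exp_le_uniDist (hγ : IsGeodesicFromTo γ x y) (p : X) {ε : ℝ} (hε : 0 ≤ ε) :
    dist x y * exp (-ε * (dist p x + dist x y)) ≤ uniDist p ε x y := by
  refine le_csInf ⟨_, γ, _, dist_nonneg, hγ.isArcParam, hγ.1, hγ.2.1, rfl⟩ ?_
  rintro l ⟨σ, L, hL, hσ, hσx, hσy, rfl⟩
  have hdL : dist x y ≤ L := by
    simpa [hσx, hσy] using hσ.dist_start_le ⟨hL, le_rfl⟩
  simpa [hσx] using hσ.mul_exp_le_uniLength p hε dist_nonneg hdL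

end IsGeodesicFromTo

theorem gehringHayman_local_general (p : X) (ε M : ℝ) (hε : 0 < ε) :
    ∀ x y : X, dist x y ≤ M → ∀ γ : ℝ → X, IsGeodesicFromTo γ x y →
      uniLength p ε γ (dist x y) ≤ Real.exp (2 * ε * M) * uniDist p ε x y := by
  intro x y hxy γ hγ
  set d := dist x y
  have hlower := hγ.mul_exp_le_uniDist p hε.le
  calc uniLength p ε γ d ≤ d * exp (-ε * (dist p x - d)) := hγ.uniLength_le p hε.le
    _ = exp (2 * ε * d) * (d * exp (-ε * (dist p x + d))) := by
      rw [mul_left_comm, ← exp_add]; ring_nf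
    _ ≤ exp (2 * ε * d) * uniDist p ε x y := by gcongr
    _ ≤ exp (2 * ε * M) * uniDist p ε x y := by
      gcongr
      exact (mul_nonneg dist_nonneg (exp_pos _).le).trans hlower

/-- In a geodesic metric space, for points at distance at most `M`, the `ρ_ε`-length of any
geodesic between them is at most `exp (2 ε M)` times the uniformized distance. -/
theorem gehringHayman_local (p : X) (ε M : ℝ) (hε : 0 < ε) (hM : 0 < M)
    (hgeo : ∀ x y : X, ∃ γ : ℝ → X, IsGeodesicFromTo γ x y) :
    ∀ x y : X, dist x y ≤ M → ∀ γ : ℝ → X, IsGeodesicFromTo γ x y →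
      uniLength p ε γ (dist x y) ≤ Real.exp (2 * ε * M) * uniDist p ε x y :=
  gehringHayman_local_general p ε M hε

end
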